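/- arXiv:1503.01335 — 2 statements merged into one kernel-verified Lean document; each statement's English description precedes it below -/
import Mathlib

section
/- Assume γ₂ > 0, γ₁ ≠ γ₂, and let Λ₃(t) denote the smallest real root of φ(t,·) for large t. Then ∂Λφ(t,Λ₃(t)) > 0 for all sufficiently large t, t²·∂tφ(t,Λ₃(t)) → −g·γ₂d₂ as t → ∞, there exists t₀ > 0 such that Λ₃ is strictly increasing on [t₀,∞), and if γ₁d₁ + γ₂d₂ < 0 then (Λ₃(t) − γ₂d₂)·(Λ₃(t) − γ₁d₁ − γ₂d₂) ≤ 0 for all sufficiently large t. -/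
open Real Filter Asymptotics

/-- The coefficient `A(t)` of the dispersion cubic. -/
noncomputable def funA (d₁ d₂ γ₁ γ₂ t : ℝ) : ℝ :=
  -(1 / t) * (γ₂ * (t * d₂ + Real.sinh (t * d₂) * Real.cosh (t * d₁) / Real.cosh (t * (d₁ + d₂)))
    + γ₁ * Real.sinh (t * d₁) * Real.cosh (t * d₂) / Real.cosh (t * (d₁ + d₂)))

/-- The coefficient `B(t)` of the dispersion cubic. -/
noncomputable def funB (d₁ d₂ g γ₁ γ₂ t : ℝ) : ℝ :=
  Real.tanh (t * (d₁ + d₂)) * ((γ₂ ^ 2 * d₂ - g) / t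
    + γ₂ * (γ₁ - γ₂) * Real.sinh (t * d₁) * Real.sinh (t * d₂) /
        (t ^ 2 * Real.sinh (t * (d₁ + d₂))))

/-- The coefficient `C(t)` of the dispersion cubic. -/
noncomputable def funC (d₁ d₂ g γ₁ γ₂ t : ℝ) : ℝ :=
  (g * Real.tanh (t * (d₁ + d₂)) / t ^ 2) *
    ((γ₁ - γ₂) * Real.sinh (t * d₁) * Real.sinh (t * d₂) / Real.sinh (t * (d₁ + d₂))
      + γ₂ * d₂ * t)

/-- The dispersion cubic `φ(t,Λ)`. -/
noncomputable def phi (d₁ d₂ g γ₁ γ₂ t Λ : ℝ) : ℝ :=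
  Λ ^ 3 + funA d₁ d₂ γ₁ γ₂ t * Λ ^ 2 + funB d₁ d₂ g γ₁ γ₂ t * Λ + funC d₁ d₂ g γ₁ γ₂ t

/-!
On `t > 0` the coefficients `A`, `B`, `C` are affine combinations of `tanh (t d) / t`,
`sinh (t (d₂ - d₁)) / (t cosh (t d))` and `(1 - cosh (t (d₂ - d₁)) / cosh (t d)) / t²`, whose
derivatives are `-1/t²`, `0`, `0` up to exponentially small errors. Hence `t² ∂tφ(t, Λ)` tends to
`-g γ₂ d₂ < 0` uniformly for small `Λ`, so `φ(·, Λ)` is eventually decreasing near `Λ = 0`.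
For `t < s` this gives `φ(s, Λ₃ t) < φ(t, Λ₃ t) = 0`, and as `Λ₃ t < 0` lies below the other two
roots of `φ(s, ·)`, it must also lie below the third one, `Λ₃ s`.
-/

open Set Topology

namespace Real

lemma abs_sinh_le_cosh (x : ℝ) : |sinh x| ≤ cosh x := by
  have h := sinh_lt_cosh (-x)
  rw [sinh_neg, cosh_neg] at h
  exact abs_le.2 ⟨by linarith, (sinh_lt_cosh x).le⟩

lemma cosh_le_exp_abs (x : ℝ) : cosh x ≤ exp |x| := by
  rw [← cosh_abs, cosh_eq]
  linarith [exp_le_exp.2 (show -|x| ≤ |x| by linarith [abs_nonneg x])]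

lemma exp_div_two_le_cosh (x : ℝ) : exp x / 2 ≤ cosh x := by
  rw [cosh_eq]
  linarith [exp_pos (-x)]

lemma hasDerivAt_tanh (x : ℝ) : HasDerivAt tanh (1 / cosh x ^ 2) x := by
  have h := (hasDerivAt_sinh x).div (hasDerivAt_cosh x) (cosh_pos x).ne'
  rw [show tanh = fun y => sinh y / cosh y from funext fun y => tanh_eq_sinh_div_cosh y]
  refine h.congr_deriv ?_
  field_simp
  linear_combination cosh_sq x

end Real

lemma tendsto_pow_mul_div_cosh_atTop (n : ℕ) {a b : ℝ} (hab : |a| < b) {f : ℝ → ℝ}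
    (hf : ∀ x, |f x| ≤ cosh x) :
    Tendsto (fun t => t ^ n * f (t * a) / cosh (t * b)) atTop (𝓝 0) := by
  have hdecay : Tendsto (fun t : ℝ => 2 * (t ^ n * exp (-(b - |a|) * t))) atTop (𝓝 0) := by
    simpa [rpow_natCast] using
      (tendsto_rpow_mul_exp_neg_mul_atTop_nhds_zero n (b - |a|) (by linarith)).const_mul 2
  refine squeeze_zero_norm' ?_ hdecay
  filter_upwards [eventually_ge_atTop 0] with t ht
  have hnum : |f (t * a)| ≤ exp (|a| * t) :=
    calc |f (t * a)| ≤ cosh (t * a) := hf _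
      _ ≤ exp |t * a| := cosh_le_exp_abs _
      _ = exp (|a| * t) := by rw [abs_mul, abs_of_nonneg ht, mul_comm]
  calc ‖t ^ n * f (t * a) / cosh (t * b)‖ = t ^ n * |f (t * a)| / cosh (t * b) := by
        rw [norm_div, norm_mul, norm_pow, norm_of_nonneg ht, norm_of_nonneg (cosh_pos _).le,
          Real.norm_eq_abs]
    _ ≤ t ^ n * exp (|a| * t) / (exp (t * b) / 2) := by
        gcongr
        exact exp_div_two_le_cosh _
    _ = 2 * (t ^ n * exp (-(b - |a|) * t)) := by
        rw [show -(b - |a|) * t = |a| * t - t * b by ring, exp_sub]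
        field_simp

lemma tendsto_pow_div_cosh_atTop (n : ℕ) {b : ℝ} (hb : 0 < b) :
    Tendsto (fun t => t ^ n / cosh (t * b)) atTop (𝓝 0) := by
  simpa using tendsto_pow_mul_div_cosh_atTop n (a := 0) (by simpa using hb) (f := fun _ => 1)
    fun x => by simp [one_le_cosh x]

lemma tendsto_tanh_mul_atTop {b : ℝ} (hb : 0 < b) :
    Tendsto (fun t => tanh (t * b)) atTop (𝓝 1) := by
  have hexp : Tendsto (fun t => exp (-(t * b))) atTop (𝓝 0) :=
    tendsto_exp_neg_atTop_nhds_zero.comp (tendsto_id.atTop_mul_const hb)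
  have h := (hexp.mul (by simpa using tendsto_pow_div_cosh_atTop 0 hb)).const_sub 1
  rw [mul_zero, sub_zero] at h
  refine h.congr fun t => ?_
  rw [tanh_eq_sinh_div_cosh, ← cosh_sub_sinh]
  field_simp [(cosh_pos (t * b)).ne']
  ring

lemma hasDerivAt_comp_mul_div_cosh {f f' : ℝ → ℝ} (hf : ∀ x, HasDerivAt f (f' x) x)
    (e b t : ℝ) :
    HasDerivAt (fun t => f (t * e) / cosh (t * b))
      (e * f' (t * e) / cosh (t * b) - b * tanh (t * b) * (f (t * e) / cosh (t * b))) t := by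
  have hnum : HasDerivAt (fun t => f (t * e)) (f' (t * e) * e) t :=
    (hf (t * e)).comp t (hasDerivAt_mul_const e)
  have hden : HasDerivAt (fun t => cosh (t * b)) (sinh (t * b) * b) t :=
    (hasDerivAt_mul_const b).cosh
  refine (hnum.div hden (cosh_pos _).ne').congr_deriv ?_
  rw [tanh_eq_sinh_div_cosh]
  field_simp

lemma tendsto_pow_mul_deriv_comp_mul_div_cosh_atTop (n : ℕ) {e b : ℝ} (heb : |e| < b)
    {f f' : ℝ → ℝ} (hf : ∀ x, HasDerivAt f (f' x) x) (hfb : ∀ x, |f x| ≤ cosh x)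
    (hf'b : ∀ x, |f' x| ≤ cosh x) :
    Tendsto (fun t => t ^ n * deriv (fun t => f (t * e) / cosh (t * b)) t) atTop (𝓝 0) := by
  have hb : 0 < b := (abs_nonneg e).trans_lt heb
  have h := ((tendsto_pow_mul_div_cosh_atTop n heb hf'b).const_mul e).sub
    (((tendsto_tanh_mul_atTop hb).const_mul b).mul (tendsto_pow_mul_div_cosh_atTop n heb hfb))
  rw [mul_zero, mul_zero, sub_zero] at h
  refine h.congr fun t => ?_
  rw [(hasDerivAt_comp_mul_div_cosh hf e b t).deriv]
  ring

lemma tendsto_sq_mul_deriv_div_self {g : ℝ → ℝ} {L : ℝ} (hg : ∀ t > 0, DifferentiableAt ℝ g t)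
    (hgL : Tendsto g atTop (𝓝 L)) (hg' : Tendsto (fun t => t * deriv g t) atTop (𝓝 0)) :
    Tendsto (fun t => t ^ 2 * deriv (fun t => g t / t) t) atTop (𝓝 (-L)) := by
  have h := hg'.sub hgL
  rw [zero_sub] at h
  refine h.congr' ?_
  filter_upwards [eventually_gt_atTop 0] with t ht
  rw [deriv_fun_div (hg t ht) differentiableAt_fun_id ht.ne', deriv_id'']
  field_simp

lemma tendsto_sq_mul_deriv_div_sq {g : ℝ → ℝ} {L : ℝ} (hg : ∀ t > 0, DifferentiableAt ℝ g t)
    (hgL : Tendsto g atTop (𝓝 L)) (hg' : Tendsto (deriv g) atTop (𝓝 0)) :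
    Tendsto (fun t => t ^ 2 * deriv (fun t => g t / t ^ 2) t) atTop (𝓝 0) := by
  have h := hg'.sub ((hgL.mul tendsto_inv_atTop_zero).const_mul 2)
  rw [mul_zero, mul_zero, sub_zero] at h
  refine h.congr' ?_
  filter_upwards [eventually_gt_atTop 0] with t ht
  rw [deriv_fun_div (hg t ht) (differentiableAt_pow 2) (pow_ne_zero 2 ht.ne'),
    (hasDerivAt_pow 2 t).deriv]
  field_simp
  ring

lemma hasDerivAt_tanh_mul (b t : ℝ) :
    HasDerivAt (fun t => tanh (t * b)) (b / cosh (t * b) ^ 2) t := by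
  have h := (hasDerivAt_tanh (t * b)).comp t (hasDerivAt_mul_const b)
  exact h.congr_deriv (by ring)

lemma differentiableAt_tanh_mul_div (b : ℝ) {t : ℝ} (ht : t ≠ 0) :
    DifferentiableAt ℝ (fun t => tanh (t * b) / t) t :=
  (hasDerivAt_tanh_mul b t).differentiableAt.div differentiableAt_fun_id ht

lemma differentiableAt_sinh_mul_div_cosh_mul_div (e b : ℝ) {t : ℝ} (ht : t ≠ 0) :
    DifferentiableAt ℝ (fun t => sinh (t * e) / cosh (t * b) / t) t :=
  (hasDerivAt_comp_mul_div_cosh hasDerivAt_sinh e b t).differentiableAt.div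
    differentiableAt_fun_id ht

lemma differentiableAt_one_sub_cosh_mul_div_cosh_mul_div_sq (e b : ℝ) {t : ℝ} (ht : t ≠ 0) :
    DifferentiableAt ℝ (fun t => (1 - cosh (t * e) / cosh (t * b)) / t ^ 2) t :=
  ((hasDerivAt_comp_mul_div_cosh hasDerivAt_cosh e b t).differentiableAt.const_sub 1).div
    (differentiableAt_pow 2) (pow_ne_zero 2 ht)

lemma tendsto_sq_mul_deriv_tanh_mul_div {b : ℝ} (hb : 0 < b) :
    Tendsto (fun t => t ^ 2 * deriv (fun t => tanh (t * b) / t) t) atTop (𝓝 (-1)) := by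
  refine tendsto_sq_mul_deriv_div_self (fun t _ => (hasDerivAt_tanh_mul b t).differentiableAt)
    (tendsto_tanh_mul_atTop hb) ?_
  have h := ((tendsto_pow_div_cosh_atTop 1 hb).mul (tendsto_pow_div_cosh_atTop 0 hb)).const_mul b
  rw [mul_zero, mul_zero] at h
  refine h.congr fun t => ?_
  rw [(hasDerivAt_tanh_mul b t).deriv]
  ring

lemma tendsto_sq_mul_deriv_sinh_mul_div_cosh_mul_div {e b : ℝ} (heb : |e| < b) :
    Tendsto (fun t => t ^ 2 * deriv (fun t => sinh (t * e) / cosh (t * b) / t) t) atTop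
      (𝓝 0) := by
  have hlim : Tendsto (fun t => sinh (t * e) / cosh (t * b)) atTop (𝓝 0) := by
    simpa using tendsto_pow_mul_div_cosh_atTop 0 heb abs_sinh_le_cosh
  have hderiv := tendsto_pow_mul_deriv_comp_mul_div_cosh_atTop 1 heb hasDerivAt_sinh
    abs_sinh_le_cosh fun x => (abs_of_pos (cosh_pos x)).le
  simpa using tendsto_sq_mul_deriv_div_self
    (fun t _ => (hasDerivAt_comp_mul_div_cosh hasDerivAt_sinh e b t).differentiableAt) hlim
    (by simpa using hderiv)

lemma tendsto_sq_mul_deriv_one_sub_cosh_mul_div_cosh_mul_div_sq {e b : ℝ} (heb : |e| < b) :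
    Tendsto (fun t => t ^ 2 * deriv (fun t => (1 - cosh (t * e) / cosh (t * b)) / t ^ 2) t)
      atTop (𝓝 0) := by
  have hcosh : ∀ x, |cosh x| ≤ cosh x := fun x => (abs_of_pos (cosh_pos x)).le
  refine tendsto_sq_mul_deriv_div_sq (g := fun t => 1 - cosh (t * e) / cosh (t * b)) (L := 1)
    (fun t _ => (hasDerivAt_comp_mul_div_cosh hasDerivAt_cosh e b t).differentiableAt.const_sub 1)
    (by simpa using (tendsto_pow_mul_div_cosh_atTop 0 heb hcosh).const_sub 1) ?_
  have h := (tendsto_pow_mul_deriv_comp_mul_div_cosh_atTop 0 heb hasDerivAt_cosh hcosh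
    abs_sinh_le_cosh (b := b)).neg
  simp only [pow_zero, one_mul, neg_zero] at h
  refine h.congr fun t => ?_
  rw [deriv_const_sub]

lemma hasDerivAt_of_eq_affine {f u v : ℝ → ℝ} {c₀ c₁ c₂ t : ℝ}
    (hf : ∀ s > 0, f s = c₀ + c₁ * u s + c₂ * v s) (hu : DifferentiableAt ℝ u t)
    (hv : DifferentiableAt ℝ v t) (ht : 0 < t) :
    HasDerivAt f (c₁ * deriv u t + c₂ * deriv v t) t :=
  (((hu.hasDerivAt.const_mul c₁).const_add c₀).add
    (hv.hasDerivAt.const_mul c₂)).congr_of_eventuallyEq (eventuallyEq_of_mem (Ioi_mem_nhds ht) hf)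

lemma tendsto_sq_mul_deriv_of_eq_affine {f u v : ℝ → ℝ} {c₀ c₁ c₂ Lu Lv : ℝ}
    (hf : ∀ s > 0, f s = c₀ + c₁ * u s + c₂ * v s) (hu : ∀ t > 0, DifferentiableAt ℝ u t)
    (hv : ∀ t > 0, DifferentiableAt ℝ v t)
    (hLu : Tendsto (fun t => t ^ 2 * deriv u t) atTop (𝓝 Lu))
    (hLv : Tendsto (fun t => t ^ 2 * deriv v t) atTop (𝓝 Lv)) :
    Tendsto (fun t => t ^ 2 * deriv f t) atTop (𝓝 (c₁ * Lu + c₂ * Lv)) := by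
  refine ((hLu.const_mul c₁).add (hLv.const_mul c₂)).congr' ?_
  filter_upwards [eventually_gt_atTop 0] with t ht
  rw [(hasDerivAt_of_eq_affine hf (hu t ht) (hv t ht) ht).deriv]
  ring

lemma one_sub_cosh_sub_div_cosh_add (x y : ℝ) :
    1 - cosh (y - x) / cosh (x + y) = 2 * (sinh x * sinh y / cosh (x + y)) := by
  have hC := (cosh_pos (x + y)).ne'
  field_simp
  rw [cosh_sub, cosh_add]
  ring

section Coefficients

variable {d₁ d₂ g γ₁ γ₂ t : ℝ}

lemma funA_eq (ht : t ≠ 0) :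
    funA d₁ d₂ γ₁ γ₂ t = -(γ₂ * d₂) + -((γ₁ + γ₂) / 2) * (tanh (t * (d₁ + d₂)) / t)
      + (γ₁ - γ₂) / 2 * (sinh (t * (d₂ - d₁)) / cosh (t * (d₁ + d₂)) / t) := by
  have hC := (cosh_pos (t * d₁ + t * d₂)).ne'
  rw [cosh_add] at hC
  unfold funA
  rw [show t * (d₁ + d₂) = t * d₁ + t * d₂ by ring, show t * (d₂ - d₁) = t * d₂ - t * d₁ by ring,
    tanh_eq_sinh_div_cosh, sinh_sub, sinh_add, cosh_add]
  field_simp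
  ring

lemma funB_eq (hd : d₁ + d₂ ≠ 0) (ht : t ≠ 0) :
    funB d₁ d₂ g γ₁ γ₂ t = (γ₂ ^ 2 * d₂ - g) * (tanh (t * (d₁ + d₂)) / t)
      + γ₂ * (γ₁ - γ₂) / 2 * ((1 - cosh (t * (d₂ - d₁)) / cosh (t * (d₁ + d₂))) / t ^ 2) := by
  have hC := (cosh_pos (t * d₁ + t * d₂)).ne'
  have hS : sinh (t * d₁ + t * d₂) ≠ 0 :=
    sinh_ne_zero.2 (by rw [← mul_add]; exact mul_ne_zero ht hd)
  unfold funB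
  rw [show t * (d₂ - d₁) = t * d₂ - t * d₁ by ring, show t * (d₁ + d₂) = t * d₁ + t * d₂ by ring,
    one_sub_cosh_sub_div_cosh_add, tanh_eq_sinh_div_cosh]
  field_simp

lemma funC_eq (hd : d₁ + d₂ ≠ 0) (ht : t ≠ 0) :
    funC d₁ d₂ g γ₁ γ₂ t = g * (γ₂ * d₂) * (tanh (t * (d₁ + d₂)) / t)
      + g * (γ₁ - γ₂) / 2 * ((1 - cosh (t * (d₂ - d₁)) / cosh (t * (d₁ + d₂))) / t ^ 2) := by
  have hC := (cosh_pos (t * d₁ + t * d₂)).ne'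
  have hS : sinh (t * d₁ + t * d₂) ≠ 0 :=
    sinh_ne_zero.2 (by rw [← mul_add]; exact mul_ne_zero ht hd)
  unfold funC
  rw [show t * (d₂ - d₁) = t * d₂ - t * d₁ by ring, show t * (d₁ + d₂) = t * d₁ + t * d₂ by ring,
    one_sub_cosh_sub_div_cosh_add, tanh_eq_sinh_div_cosh]
  field_simp
  ring

end Coefficients

section Derivatives

variable {d₁ d₂ g γ₁ γ₂ t : ℝ}

lemma differentiableAt_funA (ht : 0 < t) : DifferentiableAt ℝ (funA d₁ d₂ γ₁ γ₂) t :=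
  (hasDerivAt_of_eq_affine (fun _ hs => funA_eq (ne_of_gt hs))
    (differentiableAt_tanh_mul_div _ ht.ne')
    (differentiableAt_sinh_mul_div_cosh_mul_div _ _ ht.ne') ht).differentiableAt

lemma differentiableAt_funB (hd : d₁ + d₂ ≠ 0) (ht : 0 < t) :
    DifferentiableAt ℝ (funB d₁ d₂ g γ₁ γ₂) t :=
  (hasDerivAt_of_eq_affine (c₀ := 0) (fun _ hs => by rw [funB_eq hd (ne_of_gt hs), zero_add])
    (differentiableAt_tanh_mul_div _ ht.ne')
    (differentiableAt_one_sub_cosh_mul_div_cosh_mul_div_sq _ _ ht.ne') ht).differentiableAt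

lemma differentiableAt_funC (hd : d₁ + d₂ ≠ 0) (ht : 0 < t) :
    DifferentiableAt ℝ (funC d₁ d₂ g γ₁ γ₂) t :=
  (hasDerivAt_of_eq_affine (c₀ := 0) (fun _ hs => by rw [funC_eq hd (ne_of_gt hs), zero_add])
    (differentiableAt_tanh_mul_div _ ht.ne')
    (differentiableAt_one_sub_cosh_mul_div_cosh_mul_div_sq _ _ ht.ne') ht).differentiableAt

lemma hasDerivAt_phi (hd : d₁ + d₂ ≠ 0) (ht : 0 < t) (Λ : ℝ) :
    HasDerivAt (fun t => phi d₁ d₂ g γ₁ γ₂ t Λ)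
      (deriv (funA d₁ d₂ γ₁ γ₂) t * Λ ^ 2 + deriv (funB d₁ d₂ g γ₁ γ₂) t * Λ
        + deriv (funC d₁ d₂ g γ₁ γ₂) t) t :=
  ((((differentiableAt_funA ht).hasDerivAt.mul_const (Λ ^ 2)).const_add (Λ ^ 3)).add
    ((differentiableAt_funB hd ht).hasDerivAt.mul_const Λ)).add
    (differentiableAt_funC hd ht).hasDerivAt

lemma abs_sub_lt_add (hd₁ : 0 < d₁) (hd₂ : 0 < d₂) : |d₂ - d₁| < d₁ + d₂ :=
  abs_lt.2 ⟨by linarith, by linarith⟩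

lemma tendsto_sq_mul_deriv_funA (hd₁ : 0 < d₁) (hd₂ : 0 < d₂) :
    Tendsto (fun t => t ^ 2 * deriv (funA d₁ d₂ γ₁ γ₂) t) atTop (𝓝 ((γ₁ + γ₂) / 2)) := by
  convert tendsto_sq_mul_deriv_of_eq_affine (fun _ hs => funA_eq (ne_of_gt hs))
    (fun _ ht => differentiableAt_tanh_mul_div _ ht.ne')
    (fun _ ht => differentiableAt_sinh_mul_div_cosh_mul_div _ _ ht.ne')
    (tendsto_sq_mul_deriv_tanh_mul_div (by linarith))
    (tendsto_sq_mul_deriv_sinh_mul_div_cosh_mul_div (abs_sub_lt_add hd₁ hd₂)) using 2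
  ring

lemma tendsto_sq_mul_deriv_funB (hd₁ : 0 < d₁) (hd₂ : 0 < d₂) :
    Tendsto (fun t => t ^ 2 * deriv (funB d₁ d₂ g γ₁ γ₂) t) atTop (𝓝 (g - γ₂ ^ 2 * d₂)) := by
  convert tendsto_sq_mul_deriv_of_eq_affine (f := funB d₁ d₂ g γ₁ γ₂) (c₀ := 0)
    (fun _ hs => by rw [funB_eq (by linarith) (ne_of_gt hs), zero_add])
    (fun _ ht => differentiableAt_tanh_mul_div _ ht.ne')
    (fun _ ht => differentiableAt_one_sub_cosh_mul_div_cosh_mul_div_sq _ _ ht.ne')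
    (tendsto_sq_mul_deriv_tanh_mul_div (by linarith))
    (tendsto_sq_mul_deriv_one_sub_cosh_mul_div_cosh_mul_div_sq (abs_sub_lt_add hd₁ hd₂)) using 2
  ring

lemma tendsto_sq_mul_deriv_funC (hd₁ : 0 < d₁) (hd₂ : 0 < d₂) :
    Tendsto (fun t => t ^ 2 * deriv (funC d₁ d₂ g γ₁ γ₂) t) atTop (𝓝 (-(g * (γ₂ * d₂)))) := by
  convert tendsto_sq_mul_deriv_of_eq_affine (f := funC d₁ d₂ g γ₁ γ₂) (c₀ := 0)
    (fun _ hs => by rw [funC_eq (by linarith) (ne_of_gt hs), zero_add])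
    (fun _ ht => differentiableAt_tanh_mul_div _ ht.ne')
    (fun _ ht => differentiableAt_one_sub_cosh_mul_div_cosh_mul_div_sq _ _ ht.ne')
    (tendsto_sq_mul_deriv_tanh_mul_div (by linarith))
    (tendsto_sq_mul_deriv_one_sub_cosh_mul_div_cosh_mul_div_sq (abs_sub_lt_add hd₁ hd₂)) using 2
  ring

end Derivatives

lemma exists_pos_eventually_quadratic_neg {ι : Type*} {l : Filter ι} {a b c : ι → ℝ}
    {α β γ : ℝ} (ha : Tendsto a l (𝓝 α)) (hb : Tendsto b l (𝓝 β)) (hc : Tendsto c l (𝓝 γ))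
    (hγ : γ < 0) : ∃ δ > 0, ∀ᶠ i in l, ∀ x, |x| < δ → a i * x ^ 2 + b i * x + c i < 0 := by
  have hx : Tendsto (fun p : ι × ℝ => p.2) (l ×ˢ 𝓝 0) (𝓝 0) := tendsto_snd
  have hlim : Tendsto (fun p : ι × ℝ => a p.1 * p.2 ^ 2 + b p.1 * p.2 + c p.1) (l ×ˢ 𝓝 0)
      (𝓝 γ) := by
    simpa using (((ha.comp tendsto_fst).mul (hx.pow 2)).add ((hb.comp tendsto_fst).mul hx)).add
      (hc.comp tendsto_fst)
  obtain ⟨p, hp, q, hq, hpq⟩ := eventually_prod_iff.1 (hlim.eventually (gt_mem_nhds hγ))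
  obtain ⟨δ, hδ, hqδ⟩ := Metric.eventually_nhds_iff.1 hq
  exact ⟨δ, hδ, hp.mono fun i hi x hx => hpq hi (hqδ (by simpa using hx))⟩

section Monotonicity

variable {d₁ d₂ g γ₁ γ₂ : ℝ}

lemma exists_pos_eventually_deriv_phi_neg (hd₁ : 0 < d₁) (hd₂ : 0 < d₂) (hg : 0 < g)
    (hγ₂ : 0 < γ₂) : ∃ δ > 0, ∀ᶠ t in atTop, ∀ Λ, |Λ| < δ →
      deriv (funA d₁ d₂ γ₁ γ₂) t * Λ ^ 2 + deriv (funB d₁ d₂ g γ₁ γ₂) t * Λ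
        + deriv (funC d₁ d₂ g γ₁ γ₂) t < 0 := by
  obtain ⟨δ, hδ, hneg⟩ := exists_pos_eventually_quadratic_neg (tendsto_sq_mul_deriv_funA hd₁ hd₂)
    (tendsto_sq_mul_deriv_funB hd₁ hd₂) (tendsto_sq_mul_deriv_funC hd₁ hd₂)
    (neg_neg_of_pos (by positivity : 0 < g * (γ₂ * d₂)))
  refine ⟨δ, hδ, ?_⟩
  filter_upwards [hneg] with t ht Λ hΛ
  have h : t ^ 2 * (deriv (funA d₁ d₂ γ₁ γ₂) t * Λ ^ 2 + deriv (funB d₁ d₂ g γ₁ γ₂) t * Λ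
      + deriv (funC d₁ d₂ g γ₁ γ₂) t) < 0 := by linarith [ht Λ hΛ]
  exact neg_of_mul_neg_right h (sq_nonneg t)

lemma phi_strictAntiOn_Ici (hd : d₁ + d₂ ≠ 0) {T Λ : ℝ} (hT : 0 < T)
    (hneg : ∀ t ≥ T, deriv (funA d₁ d₂ γ₁ γ₂) t * Λ ^ 2 + deriv (funB d₁ d₂ g γ₁ γ₂) t * Λ
      + deriv (funC d₁ d₂ g γ₁ γ₂) t < 0) :
    StrictAntiOn (fun t => phi d₁ d₂ g γ₁ γ₂ t Λ) (Ici T) := by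
  refine strictAntiOn_of_deriv_neg (convex_Ici T)
    (fun t ht => (hasDerivAt_phi hd (hT.trans_le ht) Λ).continuousAt.continuousWithinAt)
    fun t ht => ?_
  rw [interior_Ici] at ht
  rw [(hasDerivAt_phi hd (hT.trans ht) Λ).deriv]
  exact hneg t (le_of_lt ht)

lemma lt_of_sub_mul_sub_mul_sub_neg {x r₁ r₂ r₃ : ℝ} (h : (x - r₁) * (x - r₂) * (x - r₃) < 0)
    (h₁ : x < r₁) (h₂ : x < r₂) : x < r₃ := by
  have := neg_of_mul_neg_right h (mul_pos_of_neg_of_neg (sub_neg.2 h₁) (sub_neg.2 h₂)).le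
  linarith

lemma exists_strictMonoOn_smallest_root (hd₁ : 0 < d₁) (hd₂ : 0 < d₂) (hg : 0 < g)
    (hγ₂ : 0 < γ₂) {Λ₁ Λ₂ Λ₃ : ℝ → ℝ}
    (hroots : ∀ᶠ t in atTop,
      Λ₃ t < Λ₂ t ∧ Λ₂ t < Λ₁ t ∧ 0 < Λ₂ t ∧ Λ₃ t < 0 ∧
      ∀ Λ : ℝ, phi d₁ d₂ g γ₁ γ₂ t Λ = (Λ - Λ₁ t) * (Λ - Λ₂ t) * (Λ - Λ₃ t))
    (hlim3 : Tendsto Λ₃ atTop (𝓝 0)) :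
    ∃ t₀ > 0, StrictMonoOn Λ₃ (Ici t₀) := by
  obtain ⟨δ, hδ, hneg⟩ := exists_pos_eventually_deriv_phi_neg hd₁ hd₂ hg hγ₂ (γ₁ := γ₁)
  have hsmall : ∀ᶠ t in atTop, |Λ₃ t| < δ := by
    simpa using hlim3.abs.eventually_lt_const (by simpa using hδ)
  obtain ⟨T, hT⟩ := eventually_atTop.1
    ((hroots.and hneg).and (hsmall.and (eventually_gt_atTop 0)))
  refine ⟨T, (hT T le_rfl).2.2, fun t (ht : T ≤ t) s (hs : T ≤ s) hts => ?_⟩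
  obtain ⟨⟨⟨-, -, -, h3t, hfact⟩, -⟩, hδt, -⟩ := hT t ht
  obtain ⟨⟨⟨-, h21, h2s, -, hfacs⟩, -⟩, -⟩ := hT s hs
  have hanti := phi_strictAntiOn_Ici (by linarith) (hT T le_rfl).2.2
    fun r hr => (hT r hr).1.2 _ hδt
  have hdecr : phi d₁ d₂ g γ₁ γ₂ s (Λ₃ t) < phi d₁ d₂ g γ₁ γ₂ t (Λ₃ t) := hanti ht hs hts
  rw [hfacs, hfact, sub_self, mul_zero] at hdecr
  exact lt_of_sub_mul_sub_mul_sub_neg hdecr (by linarith) (by linarith)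

end Monotonicity

lemma cubic_deriv_at_root {a b c r₁ r₂ r₃ : ℝ}
    (h : ∀ x, x ^ 3 + a * x ^ 2 + b * x + c = (x - r₁) * (x - r₂) * (x - r₃)) :
    3 * r₃ ^ 2 + 2 * a * r₃ + b = (r₃ - r₁) * (r₃ - r₂) := by
  -- Vieta: evaluating at `0, ±1` gives `a = -(r₁ + r₂ + r₃)` and `b = r₁ r₂ + r₁ r₃ + r₂ r₃`.
  linear_combination r₃ * (h 1 + h (-1) - 2 * h 0) + (h 1 - h (-1)) / 2

theorem smallest_root_properties_general
    (d₁ d₂ g γ₁ γ₂ : ℝ) (hd₁ : 0 < d₁) (hd₂ : 0 < d₂) (hg : 0 < g)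
    (hγ₂ : 0 < γ₂) (Λ₁ Λ₂ Λ₃ : ℝ → ℝ)
    (hroots : ∀ᶠ t in atTop,
      Λ₃ t < Λ₂ t ∧ Λ₂ t < Λ₁ t ∧ 0 < Λ₂ t ∧ Λ₃ t < 0 ∧
      ∀ Λ : ℝ, phi d₁ d₂ g γ₁ γ₂ t Λ = (Λ - Λ₁ t) * (Λ - Λ₂ t) * (Λ - Λ₃ t))
    (hlim3 : Tendsto Λ₃ atTop (nhds 0)) :
    (∀ᶠ t in atTop,
      0 < 3 * Λ₃ t ^ 2 + 2 * funA d₁ d₂ γ₁ γ₂ t * Λ₃ t + funB d₁ d₂ g γ₁ γ₂ t) ∧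
    Tendsto (fun t : ℝ =>
        t ^ 2 * (deriv (funA d₁ d₂ γ₁ γ₂) t * Λ₃ t ^ 2
          + deriv (funB d₁ d₂ g γ₁ γ₂) t * Λ₃ t + deriv (funC d₁ d₂ g γ₁ γ₂) t))
      atTop (nhds (-(g * (γ₂ * d₂)))) ∧
    (∃ t₀ > (0 : ℝ), StrictMonoOn Λ₃ (Set.Ici t₀)) ∧
    (γ₁ * d₁ + γ₂ * d₂ < 0 → ∀ᶠ t in atTop,
      (Λ₃ t - γ₂ * d₂) * (Λ₃ t - γ₁ * d₁ - γ₂ * d₂) ≤ 0) := by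
  refine ⟨?_, ?_, exists_strictMonoOn_smallest_root hd₁ hd₂ hg hγ₂ hroots hlim3, fun hneg => ?_⟩
  · filter_upwards [hroots] with t ht
    obtain ⟨h32, h21, -, -, hfac⟩ := ht
    rw [cubic_deriv_at_root hfac]
    exact mul_pos_of_neg_of_neg (by linarith) (by linarith)
  · have h := (((tendsto_sq_mul_deriv_funA (γ₁ := γ₁) (γ₂ := γ₂) hd₁ hd₂).mul (hlim3.pow 2)).add
      ((tendsto_sq_mul_deriv_funB (g := g) (γ₁ := γ₁) (γ₂ := γ₂) hd₁ hd₂).mul hlim3)).add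
      (tendsto_sq_mul_deriv_funC (g := g) (γ₁ := γ₁) (γ₂ := γ₂) hd₁ hd₂)
    simp only [ne_eq, OfNat.ofNat_ne_zero, not_false_eq_true, zero_pow, mul_zero, zero_add] at h
    exact h.congr fun t => by ring
  · have hbelow : ∀ᶠ t in atTop, Λ₃ t < γ₂ * d₂ := hlim3.eventually_lt_const (by positivity)
    filter_upwards [hbelow, hlim3.eventually_const_lt hneg] with t hbelow habove
    exact mul_nonpos_of_nonpos_of_nonneg (by linarith) (by linarith)

/-- properties of the smallest root `Λ₃`: `∂Λφ(t,Λ₃(t)) > 0`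
eventually, `t²·∂tφ(t,Λ₃(t)) → −gγ₂d₂`, `Λ₃` is eventually strictly
increasing, and bottom-layer stagnation holds when `γ₁d₁ + γ₂d₂ < 0`. -/
theorem smallest_root_properties
    (d₁ d₂ g γ₁ γ₂ : ℝ) (hd₁ : 0 < d₁) (hd₂ : 0 < d₂) (hg : 0 < g)
    (hγ₂ : 0 < γ₂) (hne : γ₁ ≠ γ₂) (Λ₁ Λ₂ Λ₃ : ℝ → ℝ)
    (hroots : ∀ᶠ t in atTop,
      Λ₃ t < Λ₂ t ∧ Λ₂ t < Λ₁ t ∧ 0 < Λ₂ t ∧ Λ₃ t < 0 ∧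
      ∀ Λ : ℝ, phi d₁ d₂ g γ₁ γ₂ t Λ = (Λ - Λ₁ t) * (Λ - Λ₂ t) * (Λ - Λ₃ t))
    (hlim2 : Tendsto Λ₂ atTop (nhds 0))
    (hlim3 : Tendsto Λ₃ atTop (nhds 0)) :
    (∀ᶠ t in atTop,
      0 < 3 * Λ₃ t ^ 2 + 2 * funA d₁ d₂ γ₁ γ₂ t * Λ₃ t + funB d₁ d₂ g γ₁ γ₂ t) ∧
    Tendsto (fun t : ℝ =>
        t ^ 2 * (deriv (funA d₁ d₂ γ₁ γ₂) t * Λ₃ t ^ 2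
          + deriv (funB d₁ d₂ g γ₁ γ₂) t * Λ₃ t + deriv (funC d₁ d₂ g γ₁ γ₂) t))
      atTop (nhds (-(g * (γ₂ * d₂)))) ∧
    (∃ t₀ > (0 : ℝ), StrictMonoOn Λ₃ (Set.Ici t₀)) ∧
    (γ₁ * d₁ + γ₂ * d₂ < 0 → ∀ᶠ t in atTop,
      (Λ₃ t - γ₂ * d₂) * (Λ₃ t - γ₁ * d₁ - γ₂ * d₂) ≤ 0) :=
  smallest_root_properties_general d₁ d₂ g γ₁ γ₂ hd₁ hd₂ hg hγ₂ Λ₁ Λ₂ Λ₃ hroots hlim3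
end

section
/- Assume γ₂ > 0, γ₁ ≠ γ₂, and let Λ₃(t) denote the smallest real root of φ(t,·) for large t (so Λ₃(t) < 0 and Λ₃(t) → 0 as t → ∞). Then −m²¹(t,Λ₃(t))/m²²(t,Λ₃(t)) → +∞ as t → ∞, where m²¹(t,Λ) := γ₂ − γ₁ + (Λ − γ₂d₂)·[t/tanh(t·d₁) + t/tanh(t·d₂)] and m²²(t,Λ) := −Λ·t/sinh(t·d₂). -/
open Real Filter Asymptotics

/-- The multiplier symbol `m¹¹(t,Λ)`. -/
noncomputable def m11 (d₂ γ₂ t Λ : ℝ) : ℝ := -2 * Λ * (γ₂ * d₂ - Λ) * t / Real.sinh (t * d₂)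

/-- The multiplier symbol `m¹²(t,Λ)`. -/
noncomputable def m12 (d₂ g γ₂ t Λ : ℝ) : ℝ :=
  2 * (g + γ₂ * Λ - Λ ^ 2 * t / Real.tanh (t * d₂))

/-- The multiplier symbol `m²¹(t,Λ)`. -/
noncomputable def m21 (d₁ d₂ γ₁ γ₂ t Λ : ℝ) : ℝ :=
  γ₂ - γ₁ + (Λ - γ₂ * d₂) * (t / Real.tanh (t * d₁) + t / Real.tanh (t * d₂))

/-- The multiplier symbol `m²²(t,Λ)`. -/
noncomputable def m22 (d₂ t Λ : ℝ) : ℝ := -Λ * t / Real.sinh (t * d₂)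

/-! Write `−m²¹/m²² = (−m²¹/t) · sinh(t d₂)/(−Λ₃)`. Since `coth ≥ 1` on `(0, ∞)` and `Λ₃ < 0`,
`−m²¹ ≥ 2γ₂d₂t − (γ₂ − γ₁)`, so the first factor is eventually at least `γ₂d₂ > 0`; the second
tends to `+∞` because `sinh(t d₂) → ∞` while `−Λ₃ → 0⁺`. -/

lemma Real.tanh_pos {x : ℝ} (hx : 0 < x) : 0 < tanh x := by
  rw [tanh_eq_sinh_div_cosh]
  exact div_pos (sinh_pos_iff.2 hx) (cosh_pos x)

lemma Real.le_div_tanh {t x : ℝ} (ht : 0 ≤ t) (hx : 0 < x) : t ≤ t / tanh x :=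
  le_div_self ht (tanh_pos hx) (tanh_lt_one x).le

lemma Real.tendsto_sinh_atTop : Tendsto sinh atTop atTop :=
  tendsto_atTop_mono' _ ((eventually_ge_atTop 0).mono fun _ hx => self_le_sinh_iff.2 hx)
    tendsto_id

lemma mul_le_neg_m21 {d₁ d₂ γ₁ γ₂ t Λ : ℝ} (hd₁ : 0 < d₁) (hd₂ : 0 < d₂) (hγ₂ : 0 ≤ γ₂)
    (ht : 0 < t) (hΛ : Λ ≤ 0) (hlarge : γ₂ - γ₁ ≤ γ₂ * d₂ * t) :
    γ₂ * d₂ * t ≤ -m21 d₁ d₂ γ₁ γ₂ t Λ := by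
  have hsum : 2 * t ≤ t / tanh (t * d₁) + t / tanh (t * d₂) := by
    linarith [le_div_tanh ht.le (mul_pos ht hd₁), le_div_tanh ht.le (mul_pos ht hd₂)]
  have hγd : 0 ≤ γ₂ * d₂ := mul_nonneg hγ₂ hd₂.le
  have hfactor : (Λ - γ₂ * d₂) * (t / tanh (t * d₁) + t / tanh (t * d₂))
      ≤ -(γ₂ * d₂) * (2 * t) :=
    calc (Λ - γ₂ * d₂) * (t / tanh (t * d₁) + t / tanh (t * d₂))
        ≤ -(γ₂ * d₂) * (t / tanh (t * d₁) + t / tanh (t * d₂)) :=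
          mul_le_mul_of_nonneg_right (by linarith) (by linarith)
      _ ≤ -(γ₂ * d₂) * (2 * t) := mul_le_mul_of_nonpos_left hsum (by linarith)
  unfold m21
  linarith

lemma neg_m21_div_m22 (d₁ d₂ γ₁ γ₂ t Λ : ℝ) :
    -m21 d₁ d₂ γ₁ γ₂ t Λ / m22 d₂ t Λ = -m21 d₁ d₂ γ₁ γ₂ t Λ / t * (sinh (t * d₂) / -Λ) := by
  unfold m22
  rw [div_div_eq_mul_div, div_mul_div_comm, mul_comm (-Λ) t]

theorem ratio_m21_m22_smallest_root_general
    (d₁ d₂ g γ₁ γ₂ : ℝ) (hd₁ : 0 < d₁) (hd₂ : 0 < d₂)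
    (hγ₂ : 0 < γ₂) (Λ₁ Λ₂ Λ₃ : ℝ → ℝ)
    (hroots : ∀ᶠ t in atTop,
      Λ₃ t < Λ₂ t ∧ Λ₂ t < Λ₁ t ∧ 0 < Λ₂ t ∧ Λ₃ t < 0 ∧
      ∀ Λ : ℝ, phi d₁ d₂ g γ₁ γ₂ t Λ = (Λ - Λ₁ t) * (Λ - Λ₂ t) * (Λ - Λ₃ t))
    (hlim3 : Tendsto Λ₃ atTop (nhds 0)) :
    Tendsto (fun t : ℝ => -(m21 d₁ d₂ γ₁ γ₂ t (Λ₃ t)) / m22 d₂ t (Λ₃ t)) atTop atTop := by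
  have hneg : ∀ᶠ t in atTop, Λ₃ t < 0 := hroots.mono fun t h => h.2.2.2.1
  have hinv : Tendsto (fun t => (-Λ₃ t)⁻¹) atTop atTop :=
    tendsto_inv_nhdsGT_zero.comp <| tendsto_nhdsWithin_iff.2
      ⟨by simpa using hlim3.neg, hneg.mono fun t h => neg_pos.2 h⟩
  have hgrowth : Tendsto (fun t => sinh (t * d₂) / -Λ₃ t) atTop atTop := by
    simpa only [div_eq_mul_inv, Function.comp_def, id] using
      (tendsto_sinh_atTop.comp (tendsto_id.atTop_mul_const hd₂)).atTop_mul_atTop₀ hinv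
  have hγd : 0 < γ₂ * d₂ := mul_pos hγ₂ hd₂
  refine tendsto_atTop_mono' atTop ?_ (hgrowth.const_mul_atTop hγd)
  filter_upwards [hneg, eventually_gt_atTop 0,
    (tendsto_id.const_mul_atTop hγd).eventually_ge_atTop (γ₂ - γ₁)] with t hΛ ht hlarge
  rw [neg_m21_div_m22]
  have hsinh : 0 ≤ sinh (t * d₂) / -Λ₃ t :=
    div_nonneg (sinh_nonneg_iff.2 (by positivity)) (by linarith)
  refine mul_le_mul_of_nonneg_right ?_ hsinh
  rw [le_div_iff₀ ht]
  exact mul_le_neg_m21 hd₁ hd₂ hγ₂.le ht hΛ.le hlarge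

/-- along the smallest root `Λ₃`, `−m²¹/m²² → +∞` as `t → ∞`. -/
theorem ratio_m21_m22_smallest_root
    (d₁ d₂ g γ₁ γ₂ : ℝ) (hd₁ : 0 < d₁) (hd₂ : 0 < d₂) (hg : 0 < g)
    (hγ₂ : 0 < γ₂) (hne : γ₁ ≠ γ₂) (Λ₁ Λ₂ Λ₃ : ℝ → ℝ)
    (hroots : ∀ᶠ t in atTop,
      Λ₃ t < Λ₂ t ∧ Λ₂ t < Λ₁ t ∧ 0 < Λ₂ t ∧ Λ₃ t < 0 ∧
      ∀ Λ : ℝ, phi d₁ d₂ g γ₁ γ₂ t Λ = (Λ - Λ₁ t) * (Λ - Λ₂ t) * (Λ - Λ₃ t))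
    (hlim2 : Tendsto Λ₂ atTop (nhds 0))
    (hlim3 : Tendsto Λ₃ atTop (nhds 0)) :
    Tendsto (fun t : ℝ => -(m21 d₁ d₂ γ₁ γ₂ t (Λ₃ t)) / m22 d₂ t (Λ₃ t)) atTop atTop :=
  ratio_m21_m22_smallest_root_general d₁ d₂ g γ₁ γ₂ hd₁ hd₂ hγ₂ Λ₁ Λ₂ Λ₃ hroots hlim3
end
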